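/- In the graph G' of the partitioned-TJ-to-TJ construction, write T_i = {v^a : v ∈ P_i} ∪ {v^b : v ∈ P_i} ∪ {δ_i} for the i-th token gadget. Every independent set I' of G' satisfies |I' ∩ T_i| ≤ 2 for each i; moreover, if |I' ∩ T_i| = 2 then I' ∩ T_i = {v^a, v^b} for some v ∈ P_i or I' ∩ T_i = {v^a, δ_i} for some v ∈ P_i. -/

import Mathlib

/-- `I` is an independent set of the graph `G`. -/
def IsIndepFinset {α : Type*} (G : SimpleGraph α) (I : Finset α) : Prop :=
  ∀ u ∈ I, ∀ v ∈ I, ¬ G.Adj u v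

/-- `D` is a dominating set of the graph `G`. -/
def IsDomFinset {α : Type*} (G : SimpleGraph α) (D : Finset α) : Prop :=
  ∀ x : α, x ∈ D ∨ ∃ y ∈ D, G.Adj x y

/-- A token-jumping step: some token jumps from `u ∈ I` to `w ∉ I`. -/
def TJStep {α : Type*} [DecidableEq α] (I J : Finset α) : Prop :=
  ∃ u ∈ I, ∃ w, w ∉ I ∧ J = insert w (I.erase u)

/-- A token-sliding step: some token slides from `u ∈ I` along an edge to `w ∉ I`. -/
def TSStep {α : Type*} [DecidableEq α] (G : SimpleGraph α) (I J : Finset α) : Prop :=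
  ∃ u ∈ I, ∃ w, w ∉ I ∧ G.Adj u w ∧ J = insert w (I.erase u)

/-- A partitioned token-jumping step with respect to token sets `Q`. -/
def PTJStep {α : Type*} {ι : Type*} [DecidableEq α] (Q : ι → Set α) (I J : Finset α) : Prop :=
  ∃ u ∈ I, ∃ w, w ∉ I ∧ (∃ i, u ∈ Q i ∧ w ∈ Q i) ∧ J = insert w (I.erase u)

/-- A partitioned token-sliding step with respect to token sets `Q`. -/
def PTSStep {α : Type*} {ι : Type*} [DecidableEq α] (G : SimpleGraph α) (Q : ι → Set α)
    (I J : Finset α) : Prop :=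
  ∃ u ∈ I, ∃ w, w ∉ I ∧ G.Adj u w ∧ (∃ i, u ∈ Q i ∧ w ∈ Q i) ∧ J = insert w (I.erase u)

/-- There is a reconfiguration sequence `A = f 0, f 1, …, f ℓ = B` of length `ℓ`, all of whose
members satisfy `Valid`, with consecutive members related by `Step`. -/
def AdmitsSeq {α : Type*} (Valid : Finset α → Prop) (Step : Finset α → Finset α → Prop)
    (A B : Finset α) (ℓ : ℕ) : Prop :=
  ∃ f : ℕ → Finset α, f 0 = A ∧ f ℓ = B ∧ (∀ i, i ≤ ℓ → Valid (f i)) ∧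
    ∀ i, i < ℓ → Step (f i) (f (i + 1))

/-- Vertices of the graph `G'` of the partitioned-TJ-to-TJ construction. -/
inductive GVthree (V : Type*) (k : ℕ) : Type _ where
  | a : V → GVthree V k
  | b : V → GVthree V k
  | de : Fin k → GVthree V k
deriving DecidableEq

/-- The edges of `G'`. -/
def relThree {V : Type*} (G : SimpleGraph V) {k : ℕ} (P : Fin k → Finset V) :
    GVthree V k → GVthree V k → Prop
  | .a v, .a w => (∃ i, v ∈ P i ∧ w ∈ P i) ∨ G.Adj v w
  | .b v, .b w => ∃ i, v ∈ P i ∧ w ∈ P i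
  | .a v, .b w => v ≠ w ∧ ∃ i, v ∈ P i ∧ w ∈ P i
  | .de i, .b v => v ∈ P i
  | .de _, .de _ => True
  | _, _ => False

/-- The graph `G'` of the partitioned-TJ-to-TJ construction. -/
def GpThree {V : Type*} (G : SimpleGraph V) {k : ℕ} (P : Fin k → Finset V) :
    SimpleGraph (GVthree V k) :=
  SimpleGraph.fromRel (relThree G P)

/-- The `i`-th token gadget `T_i = {v^a : v ∈ P_i} ∪ {v^b : v ∈ P_i} ∪ {δ_i}`. -/
def gadget {V : Type*} [DecidableEq V] {k : ℕ} (P : Fin k → Finset V) (i : Fin k) :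
    Finset (GVthree V k) :=
  (P i).image GVthree.a ∪ (P i).image GVthree.b ∪ {GVthree.de i}


lemma mem_gadget {V : Type*} [DecidableEq V] {k : ℕ} (P : Fin k → Finset V) (i : Fin k)
    (x : GVthree V k) : x ∈ gadget P i ↔
    (∃ v ∈ P i, x = GVthree.a v) ∨ (∃ v ∈ P i, x = GVthree.b v) ∨ x = GVthree.de i := by
  simp [gadget, eq_comm]
  exact or_comm.trans or_assoc

lemma pairCases {V : Type*} [DecidableEq V] (G : SimpleGraph V) {k : ℕ}
    (P : Fin k → Finset V) (I' : Finset (GVthree V k))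
    (hI' : IsIndepFinset (GpThree G P) I') (i : Fin k) :
    ∀ x ∈ I' ∩ gadget P i, ∀ y ∈ I' ∩ gadget P i, x ≠ y →
    ∃ v ∈ P i, (x = GVthree.a v ∧ y = GVthree.b v) ∨ (x = GVthree.b v ∧ y = GVthree.a v) ∨
      (x = GVthree.a v ∧ y = GVthree.de i) ∨ (x = GVthree.de i ∧ y = GVthree.a v) := by
  intro x hx y hy hxy
  rw [Finset.mem_inter] at hx hy
  have hna : ¬ (GpThree G P).Adj x y := hI' x hx.1 y hy.1
  rw [GpThree, SimpleGraph.fromRel_adj] at hna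
  push_neg at hna
  have hrel := hna hxy
  rw [mem_gadget] at hx hy
  rcases hx.2 with ⟨v, hv, rfl⟩ | ⟨v, hv, rfl⟩ | rfl <;>
    rcases hy.2 with ⟨w, hw, rfl⟩ | ⟨w, hw, rfl⟩ | rfl <;>
    simp only [relThree, not_or] at hrel <;>
    first
    | (exfalso; exact hrel.1.1 ⟨i, hv, hw⟩)
    | (exfalso; exact hrel.1 ⟨i, hv, hw⟩)
    | (exfalso; exact hrel.2 hw)
    | (exfalso; exact hrel.1 hv)
    | (exfalso; exact hxy rfl)
    | (refine ⟨v, hv, ?_⟩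
       have hvw : v = w := by
         by_contra h
         exact hrel.1 ⟨h, i, hv, hw⟩
       subst hvw; tauto)
    | (refine ⟨w, hw, ?_⟩
       have hvw : w = v := by
         by_contra h
         exact hrel.2 ⟨h, i, hw, hv⟩
       subst hvw; tauto)
    | exact ⟨v, hv, by tauto⟩
    | exact ⟨w, hw, by tauto⟩

/-- every independent set `I'` of `G'` satisfies `|I' ∩ T_i| ≤ 2` for each `i`;
moreover if `|I' ∩ T_i| = 2` then `I' ∩ T_i = {v^a, v^b}` or `I' ∩ T_i = {v^a, δ_i}` for some
`v ∈ P_i`. -/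
theorem stmt12 {V : Type*} [Fintype V] [DecidableEq V] (G : SimpleGraph V) (k : ℕ)
    (P : Fin k → Finset V) (hP : ∀ v : V, ∃! i, v ∈ P i)
    (I' : Finset (GVthree V k)) (hI' : IsIndepFinset (GpThree G P) I') (i : Fin k) :
    (I' ∩ gadget P i).card ≤ 2 ∧
    ((I' ∩ gadget P i).card = 2 →
      (∃ v ∈ P i, I' ∩ gadget P i = {GVthree.a v, GVthree.b v}) ∨
      (∃ v ∈ P i, I' ∩ gadget P i = {GVthree.a v, GVthree.de i})) := by
  
  set S := I' ∩ gadget P i with hS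
  have pair := pairCases G P I' hI' i
  have noA2 : ∀ x ∈ S, ∀ y ∈ S, x ≠ y → ∀ v w : V,
      ¬ (x = GVthree.a v ∧ y = GVthree.a w) := by
    intro x hx y hy hxy v w ⟨h1, h2⟩
    obtain ⟨u, hu, hc⟩ := pair x hx y hy hxy
    subst h1 h2; rcases hc with ⟨_, h⟩ | ⟨h, _⟩ | ⟨_, h⟩ | ⟨h, _⟩ <;> simp_all
  have noN2 : ∀ x ∈ S, ∀ y ∈ S, x ≠ y →
      (∀ v : V, x ≠ GVthree.a v) → (∀ v : V, y ≠ GVthree.a v) → False := by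
    intro x hx y hy hxy h1 h2
    obtain ⟨u, hu, hc⟩ := pair x hx y hy hxy
    rcases hc with ⟨h, _⟩ | ⟨_, h⟩ | ⟨h, _⟩ | ⟨_, h⟩
    exacts [h1 u h, h2 u h, h1 u h, h2 u h]
  have hcard : S.card ≤ 2 := by
    by_contra h
    push_neg at h
    rw [Finset.two_lt_card] at h
    obtain ⟨x, hx, y, hy, z, hz, hxy, hxz, hyz⟩ := h
    match x, y, z with
    | GVthree.a u, GVthree.a v, _ => exact noA2 _ hx _ hy hxy u v ⟨rfl, rfl⟩
    | GVthree.a u, _, GVthree.a w => exact noA2 _ hx _ hz hxz u w ⟨rfl, rfl⟩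
    | _, GVthree.a v, GVthree.a w => exact noA2 _ hy _ hz hyz v w ⟨rfl, rfl⟩
    | GVthree.a u, GVthree.b v, GVthree.b w =>
      exact noN2 _ hy _ hz hyz (by simp) (by simp)
    | GVthree.a u, GVthree.b v, GVthree.de j =>
      exact noN2 _ hy _ hz hyz (by simp) (by simp)
    | GVthree.a u, GVthree.de j, GVthree.b w =>
      exact noN2 _ hy _ hz hyz (by simp) (by simp)
    | GVthree.a u, GVthree.de j, GVthree.de l =>
      exact noN2 _ hy _ hz hyz (by simp) (by simp)
    | GVthree.b u, GVthree.a v, GVthree.b w =>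
      exact noN2 _ hx _ hz hxz (by simp) (by simp)
    | GVthree.b u, GVthree.a v, GVthree.de l =>
      exact noN2 _ hx _ hz hxz (by simp) (by simp)
    | GVthree.de j, GVthree.a v, GVthree.b w =>
      exact noN2 _ hx _ hz hxz (by simp) (by simp)
    | GVthree.de j, GVthree.a v, GVthree.de l =>
      exact noN2 _ hx _ hz hxz (by simp) (by simp)
    | GVthree.b u, GVthree.b v, GVthree.a w =>
      exact noN2 _ hx _ hy hxy (by simp) (by simp)
    | GVthree.b u, GVthree.de j, GVthree.a w =>
      exact noN2 _ hx _ hy hxy (by simp) (by simp)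
    | GVthree.de j, GVthree.b v, GVthree.a w =>
      exact noN2 _ hx _ hy hxy (by simp) (by simp)
    | GVthree.de j, GVthree.de l, GVthree.a w =>
      exact noN2 _ hx _ hy hxy (by simp) (by simp)
    | GVthree.b u, GVthree.b v, GVthree.b w =>
      exact noN2 _ hx _ hy hxy (by simp) (by simp)
    | GVthree.b u, GVthree.b v, GVthree.de l =>
      exact noN2 _ hx _ hy hxy (by simp) (by simp)
    | GVthree.b u, GVthree.de j, GVthree.b w =>
      exact noN2 _ hx _ hy hxy (by simp) (by simp)
    | GVthree.b u, GVthree.de j, GVthree.de l =>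
      exact noN2 _ hx _ hy hxy (by simp) (by simp)
    | GVthree.de j, GVthree.b v, GVthree.b w =>
      exact noN2 _ hx _ hy hxy (by simp) (by simp)
    | GVthree.de j, GVthree.b v, GVthree.de l =>
      exact noN2 _ hx _ hy hxy (by simp) (by simp)
    | GVthree.de j, GVthree.de l, GVthree.b w =>
      exact noN2 _ hx _ hy hxy (by simp) (by simp)
    | GVthree.de j, GVthree.de l, GVthree.de m =>
      exact noN2 _ hx _ hy hxy (by simp) (by simp)
  refine ⟨hcard, fun h2 => ?_⟩
  obtain ⟨x, y, hxy, hSxy⟩ := Finset.card_eq_two.mp h2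
  have hx : x ∈ S := by rw [hSxy]; simp
  have hy : y ∈ S := by rw [hSxy]; simp
  obtain ⟨v, hv, hc⟩ := pair x hx y hy hxy
  rcases hc with ⟨rfl, rfl⟩ | ⟨rfl, rfl⟩ | ⟨rfl, rfl⟩ | ⟨rfl, rfl⟩
  · exact Or.inl ⟨v, hv, hSxy⟩
  · exact Or.inl ⟨v, hv, by rw [hSxy, Finset.pair_comm]⟩
  · exact Or.inr ⟨v, hv, hSxy⟩
  · exact Or.inr ⟨v, hv, by rw [hSxy, Finset.pair_comm]⟩
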